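/- arXiv:1510.03757 — 2 statements merged into one kernel-verified Lean document; each statement's English description precedes it below -/
import Mathlib

section
/- For the map f(x) = (ε₁(ε₂x₂x₁ + x₃x₁² + ⋯ + xₙxₙ₁^{n-1} + x₁^{n+1}), ε₂x₂, x₃, …, xₙ) from ℝⁿ to ℝⁿ (case k = n), with λ its Jacobian determinant and η = ∂/∂x₁, the sign of det(grad λ, grad(ηλ), …, grad(η^{n-1}λ))(0) equals (-1)^{n-1} ε₁ⁿ ε₂^{n+1}. -/
open Finset

private lemma itd_add {j : ℕ} {f g : ℝ → ℝ} (hf : ContDiff ℝ (⊤ : ℕ∞) f) (hg : ContDiff ℝ (⊤ : ℕ∞) g)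
    (x : ℝ) :
    iteratedDeriv j (fun t => f t + g t) x = iteratedDeriv j f x + iteratedDeriv j g x := by
  rw [← iteratedDerivWithin_univ, ← iteratedDerivWithin_univ, ← iteratedDerivWithin_univ]
  exact iteratedDerivWithin_add (Set.mem_univ x) uniqueDiffOn_univ
    ((hf.of_le (by exact_mod_cast le_top)).contDiffWithinAt) ((hg.of_le (by exact_mod_cast le_top)).contDiffWithinAt)

private lemma itd_sum {j : ℕ} {ι : Type*} (s : Finset ι) (F : ι → ℝ → ℝ)
    (hF : ∀ i ∈ s, ContDiff ℝ (⊤ : ℕ∞) (F i)) (x : ℝ) :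
    iteratedDeriv j (fun t => ∑ i ∈ s, F i t) x = ∑ i ∈ s, iteratedDeriv j (F i) x := by
  classical
  induction s using Finset.induction_on with
  | empty => simp [iteratedDeriv]
  | insert _ _ hni ih =>
    rename_i a s
    rw [Finset.sum_insert hni]
    have : (fun t => ∑ i ∈ insert a s, F i t) = fun t => F a t + ∑ i ∈ s, F i t := by
      funext t; rw [Finset.sum_insert hni]
    rw [this, itd_add (hF a (Finset.mem_insert_self a s))
      (ContDiff.sum fun i hi => hF i (Finset.mem_insert_of_mem hi)),
      ih fun i hi => hF i (Finset.mem_insert_of_mem hi)]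

private lemma contDiff_monomial (c : ℝ) (m : ℕ) : ContDiff ℝ (⊤ : ℕ∞) (fun t : ℝ => c * t ^ m) :=
  contDiff_const.mul (contDiff_id.pow m)

private lemma itd_monomial (j : ℕ) (c : ℝ) (m : ℕ) (x : ℝ) :
    iteratedDeriv j (fun t : ℝ => c * t ^ m) x = c * (m.descFactorial j : ℝ) * x ^ (m - j) := by
  induction j generalizing c m with
  | zero => simp
  | succ j ih =>
    rw [iteratedDeriv_succ']
    have hd : (deriv fun t : ℝ => c * t ^ m) = fun t : ℝ => (c * m) * t ^ (m - 1) := by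
      funext t
      rw [deriv_const_mul _ (differentiable_pow m |>.differentiableAt), deriv_pow_field]
      ring
    rw [hd, ih]
    have h1 : m - 1 - j = m - (j + 1) := by omega
    have h2 : (m : ℝ) * ((m - 1).descFactorial j : ℝ) = (m.descFactorial (j + 1) : ℝ) := by
      cases m with
      | zero => simp
      | succ k =>
        rw [Nat.succ_descFactorial_succ]
        push_cast
        simp
    rw [h1, mul_assoc c, h2]

private lemma itd_add' {j : ℕ} (f g h : ℝ → ℝ) (hh : ∀ t, h t = f t + g t)
    (hf : ContDiff ℝ (⊤ : ℕ∞) f) (hg : ContDiff ℝ (⊤ : ℕ∞) g) (x : ℝ) :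
    iteratedDeriv j h x = iteratedDeriv j f x + iteratedDeriv j g x := by
  rw [show h = fun t => f t + g t from funext hh]; exact itd_add hf hg x

private lemma sign_pm_mul_pos {s q : ℝ} (hs : s = 1 ∨ s = -1) (hq : 0 < q) :
    Real.sign (s * q) = s := by
  rcases hs with rfl | rfl
  · rw [one_mul, Real.sign_of_pos hq]
  · rw [neg_one_mul, Real.sign_of_neg (by linarith)]

private lemma pm_pow {a : ℝ} (ha : a = 1 ∨ a = -1) (k : ℕ) : a ^ k = 1 ∨ a ^ k = -1 := by
  rcases ha with rfl | rfl
  · left; simp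
  · exact neg_one_pow_eq_or ℝ k

private lemma pm_mul {a b : ℝ} (ha : a = 1 ∨ a = -1) (hb : b = 1 ∨ b = -1) :
    a * b = 1 ∨ a * b = -1 := by
  rcases ha with rfl | rfl <;> rcases hb with rfl | rfl <;> norm_num

/-- For the Morin normal form with k = n,
`f(x) = (ε₁(ε₂x₂x₁ + x₃x₁² + ⋯ + xₙx₁^{n-1} + x₁^{n+1}), ε₂x₂, x₃, …, xₙ)`,
with λ the Jacobian determinant and η = ∂/∂x₁, the sign of
`det(grad λ, grad(ηλ), …, grad(η^{n-1}λ))(0)` equals `(-1)^{n-1} ε₁ⁿ ε₂^{n+1}`. -/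
theorem sign_det_grad_etaIter_lambda_morin (n : ℕ) (hn : 2 ≤ n)
    (ε₁ ε₂ : ℝ) (hε₁ : ε₁ = 1 ∨ ε₁ = -1) (hε₂ : ε₂ = 1 ∨ ε₂ = -1)
    (g : (Fin n → ℝ) → ℝ)
    (hg : ∀ x, g x = ε₂ * x ⟨1, by omega⟩ * x ⟨0, by omega⟩ +
      (∑ i ∈ (Finset.Icc 2 (n - 1)).attach,
        x ⟨i.1, by have := Finset.mem_Icc.mp i.2; omega⟩ * (x ⟨0, by omega⟩) ^ i.1) +
      (x ⟨0, by omega⟩) ^ (n + 1))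
    (f : (Fin n → ℝ) → (Fin n → ℝ))
    (hf : ∀ x j, f x j = if j = ⟨0, by omega⟩ then ε₁ * g x
      else if j = ⟨1, by omega⟩ then ε₂ * x ⟨1, by omega⟩ else x j)
    -- λ is the determinant of the Jacobian matrix of f
    (lam : (Fin n → ℝ) → ℝ)
    (hlam : ∀ x, lam x =
      (Matrix.of fun i j : Fin n => fderiv ℝ (fun y => f y i) x (Pi.single j 1)).det)
    -- η^j λ, the j-th directional derivative of λ along η = ∂/∂x₁
    (etaIter : ℕ → (Fin n → ℝ) → ℝ)
    (hetaIter : ∀ j x, etaIter j x =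
      iteratedDeriv j (fun t => lam (Function.update x ⟨0, by omega⟩ t)) (x ⟨0, by omega⟩)) :
    Real.sign
      (Matrix.of fun i j : Fin n =>
        fderiv ℝ (etaIter (j : ℕ)) 0 (Pi.single i 1)).det =
      (-1 : ℝ) ^ (n - 1) * ε₁ ^ n * ε₂ ^ (n + 1) := by
  classical
  have h0 : (0 : ℕ) < n := by omega
  have h1 : (1 : ℕ) < n := by omega
  set i0 : Fin n := ⟨0, h0⟩ with hi0def
  set i1 : Fin n := ⟨1, h1⟩ with hi1def
  -- the index map used in the sum
  have hmem : ∀ i : {x // x ∈ Finset.Icc 2 (n - 1)}, (i.1 : ℕ) < n := by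
    intro i; have := Finset.mem_Icc.mp i.2; omega
  set ix : {x // x ∈ Finset.Icc 2 (n - 1)} → Fin n := fun i => ⟨i.1, hmem i⟩ with hixdef
  -- useful facts about ix
  have hix0 : ∀ i, ix i ≠ i0 := by
    intro i h
    have := Finset.mem_Icc.mp i.2
    have : (ix i : ℕ) = 0 := by rw [h]
    simp [ix] at this; omega
  have hix1 : ∀ i, ix i ≠ i1 := by
    intro i h
    have h2 := Finset.mem_Icc.mp i.2
    have : (ix i : ℕ) = 1 := by rw [h]
    simp [ix] at this; omega
  -- the partial derivative of g with respect to x₀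
  set P : (Fin n → ℝ) → ℝ := fun x => ε₂ * x i1 +
    (∑ i ∈ (Finset.Icc 2 (n - 1)).attach, (i.1 : ℝ) * x (ix i) * (x i0) ^ (i.1 - 1)) +
    ((n : ℝ) + 1) * (x i0) ^ n with hPdef
  have hc : ∀ (x : Fin n → ℝ) (i : Fin n), HasFDerivAt (fun y : Fin n → ℝ => y i)
      (ContinuousLinearMap.proj (R := ℝ) (φ := fun _ : Fin n => ℝ) i) x := fun x i =>
    hasFDerivAt_apply i x
  have hpow : ∀ (x : Fin n → ℝ) (i : Fin n) (p : ℕ), HasFDerivAt (fun y : Fin n → ℝ => (y i) ^ p)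
      (((p : ℝ) * (x i) ^ (p - 1)) • ContinuousLinearMap.proj (R := ℝ) (φ := fun _ : Fin n => ℝ) i) x := by
    intro x i p
    have := (hasDerivAt_pow p (x i)).comp_hasFDerivAt x (hc x i)
    exact this
  -- the function g, rewritten with our index notation
  have hgfun : g = fun x => ε₂ * x i1 * x i0 +
      (∑ i ∈ (Finset.Icc 2 (n - 1)).attach, x (ix i) * (x i0) ^ (i.1 : ℕ)) +
      (x i0) ^ (n + 1) := funext fun x => hg x
  -- derivative of g
  set G : (Fin n → ℝ) → (Fin n → ℝ) →L[ℝ] ℝ := fun x =>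
    (P x) • ContinuousLinearMap.proj i0
    + (ε₂ * x i0) • ContinuousLinearMap.proj i1
    + ∑ i ∈ (Finset.Icc 2 (n - 1)).attach,
        ((x i0) ^ (i.1 : ℕ)) • ContinuousLinearMap.proj (ix i) with hGdef
  have hgd : ∀ x : Fin n → ℝ, HasFDerivAt g (G x) x := by
    intro x
    rw [hgfun]
    have t1 := ((hc x i1).const_mul ε₂).fun_mul (hc x i0)
    have t2 := HasFDerivAt.fun_sum (u := (Finset.Icc 2 (n - 1)).attach)
      (A := fun i (y : Fin n → ℝ) => y (ix i) * (y i0) ^ (i.1 : ℕ))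
      (fun i _ => (hc x (ix i)).mul (hpow x i0 i.1))
    have t3 := hpow x i0 (n + 1)
    have T := (t1.fun_add t2).fun_add t3
    refine T.congr_fderiv (Eq.symm ?_)
    ext v
    simp only [hGdef, hPdef, ContinuousLinearMap.add_apply, ContinuousLinearMap.smul_apply,
      ContinuousLinearMap.coe_sum', Finset.sum_apply, ContinuousLinearMap.proj_apply,
      smul_eq_mul, Nat.add_sub_cancel, Nat.cast_add, Nat.cast_one]
    have hsum : ∑ i ∈ (Finset.Icc 2 (n - 1)).attach,
        (i.1 : ℝ) * x (ix i) * x i0 ^ (i.1 - 1) * v i0 =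
        ∑ i ∈ (Finset.Icc 2 (n - 1)).attach,
        x (ix i) * ((i.1 : ℝ) * x i0 ^ (i.1 - 1) * v i0) :=
      Finset.sum_congr rfl fun i _ => by ring
    rw [add_mul, add_mul, Finset.sum_mul, hsum, Finset.sum_add_distrib]
    ring
  have hne10 : i1 ≠ i0 := by simp [hi0def, hi1def, Fin.ext_iff]
  have hGe0 : ∀ x : Fin n → ℝ, (G x) (Pi.single i0 1) = P x := by
    intro x
    simp only [hGdef, ContinuousLinearMap.add_apply, ContinuousLinearMap.smul_apply,
      ContinuousLinearMap.coe_sum', Finset.sum_apply, ContinuousLinearMap.proj_apply,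
      smul_eq_mul]
    rw [Pi.single_eq_same, Pi.single_eq_of_ne hne10,
      Finset.sum_eq_zero (fun i _ => by rw [Pi.single_eq_of_ne (hix0 i)]; ring)]
    ring
  have hlamP : ∀ x, lam x = ε₁ * ε₂ * P x := by
    intro x
    rw [hlam]
    have hrow0 : (fun y => f y i0) = fun y => ε₁ * g y := by
      funext y; rw [hf y i0]; simp
    have hrow1 : (fun y => f y i1) = fun y => ε₂ * y i1 := by
      funext y; rw [hf y i1]; simp [hne10]
    have hrowo : ∀ i : Fin n, i ≠ i0 → i ≠ i1 → (fun y => f y i) = fun y => y i := by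
      intro i hi0' hi1'; funext y; rw [hf y i]; simp [hi0', hi1']
    have hJ00 : fderiv ℝ (fun y => f y i0) x (Pi.single i0 1) = ε₁ * P x := by
      rw [hrow0, ((hgd x).const_mul ε₁).fderiv]
      simp only [ContinuousLinearMap.smul_apply, smul_eq_mul]
      rw [hGe0]
    have hJ1 : ∀ j : Fin n, fderiv ℝ (fun y => f y i1) x (Pi.single j 1) =
        ε₂ * (Pi.single (M := fun _ : Fin n => ℝ) j 1) i1 := by
      intro j
      rw [hrow1, ((hc x i1).const_mul ε₂).fderiv]
      simp
    have hJo : ∀ i j : Fin n, i ≠ i0 → i ≠ i1 →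
        fderiv ℝ (fun y => f y i) x (Pi.single j 1) = (Pi.single (M := fun _ : Fin n => ℝ) j 1) i := by
      intro i j hi0' hi1'
      rw [hrowo i hi0' hi1', (hc x i).fderiv]
      simp
    have htri : (Matrix.of fun i j : Fin n =>
        fderiv ℝ (fun y => f y i) x (Pi.single j 1)).BlockTriangular id := by
      intro i j hij
      simp only [Matrix.of_apply, id_eq] at hij ⊢
      have hi0' : i ≠ i0 := by
        intro h; rw [h] at hij; exact absurd hij (by simp [hi0def, Fin.lt_def])
      by_cases hi1' : i = i1
      · subst hi1'
        rw [hJ1 j]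
        have hj0 : j = i0 := by
          rw [Fin.ext_iff]; have := hij; rw [Fin.lt_def] at this
          simp only [hi1def] at this; simp [hi0def]; omega
        rw [hj0, Pi.single_eq_of_ne hne10]
        ring
      · rw [hJo i j hi0' hi1', Pi.single_eq_of_ne (fun (h : i = j) => absurd h (by
          intro h2; rw [h2] at hij; exact lt_irrefl _ hij))]
    rw [Matrix.det_of_upperTriangular htri]
    have hdiag : ∀ i : Fin n, (Matrix.of fun i j : Fin n =>
        fderiv ℝ (fun y => f y i) x (Pi.single j 1)) i i =
        if i = i0 then ε₁ * P x else if i = i1 then ε₂ else 1 := by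
      intro i
      by_cases hA : i = i0
      · subst hA; simp only [Matrix.of_apply, if_pos rfl]; exact hJ00
      · by_cases hB : i = i1
        · subst hB
          simp only [Matrix.of_apply, if_neg hA, if_pos rfl]
          rw [hJ1 i1, Pi.single_eq_same]; simp
        · simp only [Matrix.of_apply, if_neg hA, if_neg hB]
          rw [hJo i i hA hB, Pi.single_eq_same]
    rw [Finset.prod_congr rfl (fun i _ => hdiag i),
      Finset.prod_eq_mul_prod_sdiff_singleton_of_mem (Finset.mem_univ i0),
      Finset.prod_eq_mul_prod_sdiff_singleton_of_mem
        (show i1 ∈ Finset.univ \ {i0} by simp [hne10]),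
      Finset.prod_eq_one (fun i hi => by
        simp only [Finset.mem_sdiff, Finset.mem_singleton] at hi
        rw [if_neg hi.1.2, if_neg hi.2])]
    rw [if_pos rfl, if_neg hne10, if_pos rfl]
    ring
  have hEta : ∀ (j : ℕ) (x : Fin n → ℝ), etaIter j x =
      (ε₁ * ε₂ * ε₂ * ((Nat.descFactorial 0 j : ℝ))) * x i1
      + (∑ i ∈ (Finset.Icc 2 (n - 1)).attach,
          (ε₁ * ε₂ * ((i.1 : ℝ) * (Nat.descFactorial (i.1 - 1) j : ℝ)))
            * (x (ix i) * (x i0) ^ (i.1 - 1 - j)))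
      + (ε₁ * ε₂ * (((n : ℝ) + 1) * (Nat.descFactorial n j : ℝ))) * (x i0) ^ (n - j) := by
    intro j x
    rw [hetaIter j x]
    have hfun : (fun t => lam (Function.update x i0 t)) =
        fun t => ((ε₁ * ε₂ * (ε₂ * x i1)) * t ^ 0
          + ∑ i ∈ (Finset.Icc 2 (n - 1)).attach,
              (ε₁ * ε₂ * ((i.1 : ℝ) * x (ix i))) * t ^ (i.1 - 1))
          + (ε₁ * ε₂ * ((n : ℝ) + 1)) * t ^ n := by
      funext t
      rw [hlamP]
      simp only [hPdef]
      rw [Function.update_self, Function.update_of_ne hne10,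
        show ∑ i ∈ (Finset.Icc 2 (n - 1)).attach,
            (i.1 : ℝ) * Function.update x i0 t (ix i) * t ^ (i.1 - 1)
          = ∑ i ∈ (Finset.Icc 2 (n - 1)).attach, (i.1 : ℝ) * x (ix i) * t ^ (i.1 - 1)
          from Finset.sum_congr rfl fun i _ => by rw [Function.update_of_ne (hix0 i)],
        mul_add, mul_add, Finset.mul_sum,
        Finset.sum_congr rfl (fun (i : {y // y ∈ Finset.Icc 2 (n - 1)}) _ =>
          (by ring : ε₁ * ε₂ * ((i.1 : ℝ) * x (ix i) * t ^ (i.1 - 1))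
            = (ε₁ * ε₂ * ((i.1 : ℝ) * x (ix i))) * t ^ (i.1 - 1)))]
      ring
    rw [hfun]
    have cS : ContDiff ℝ (⊤ : ℕ∞) (fun t : ℝ => ∑ i ∈ (Finset.Icc 2 (n - 1)).attach,
        (ε₁ * ε₂ * ((i.1 : ℝ) * x (ix i))) * t ^ (i.1 - 1)) :=
      ContDiff.sum fun i _ => contDiff_monomial _ _
    rw [itd_add' (fun t => (ε₁ * ε₂ * (ε₂ * x i1)) * t ^ 0
          + ∑ i ∈ (Finset.Icc 2 (n - 1)).attach,
              (ε₁ * ε₂ * ((i.1 : ℝ) * x (ix i))) * t ^ (i.1 - 1))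
        (fun t => (ε₁ * ε₂ * ((n : ℝ) + 1)) * t ^ n) _ (fun t => rfl)
        ((contDiff_monomial _ _).add cS) (contDiff_monomial _ _),
      itd_add' (fun t => (ε₁ * ε₂ * (ε₂ * x i1)) * t ^ 0)
        (fun t => ∑ i ∈ (Finset.Icc 2 (n - 1)).attach,
              (ε₁ * ε₂ * ((i.1 : ℝ) * x (ix i))) * t ^ (i.1 - 1)) _ (fun t => rfl)
        (contDiff_monomial _ _) cS,
      itd_sum _ _ (fun i _ => contDiff_monomial _ _), itd_monomial, itd_monomial,
      Finset.sum_congr rfl (fun (i : {y // y ∈ Finset.Icc 2 (n - 1)}) _ => itd_monomial j _ _ _)]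
    rw [Nat.zero_sub, pow_zero,
      Finset.sum_congr rfl (fun (i : {y // y ∈ Finset.Icc 2 (n - 1)}) _ =>
        (by ring : (ε₁ * ε₂ * ((i.1 : ℝ) * x (ix i))) * (Nat.descFactorial (i.1 - 1) j : ℝ)
              * (x i0) ^ (i.1 - 1 - j)
          = (ε₁ * ε₂ * ((i.1 : ℝ) * (Nat.descFactorial (i.1 - 1) j : ℝ)))
            * (x (ix i) * (x i0) ^ (i.1 - 1 - j))))]
    ring
  have hMentry : ∀ (i : Fin n) (j : ℕ), fderiv ℝ (etaIter j) 0 (Pi.single i 1) =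
      (ε₁ * ε₂ * ε₂ * ((Nat.descFactorial 0 j : ℝ)))
        * (Pi.single (M := fun _ : Fin n => ℝ) i 1 i1)
      + (∑ i' ∈ (Finset.Icc 2 (n - 1)).attach,
          (ε₁ * ε₂ * ((i'.1 : ℝ) * (Nat.descFactorial (i'.1 - 1) j : ℝ)))
            * ((0 : ℝ) ^ (i'.1 - 1 - j)
              * (Pi.single (M := fun _ : Fin n => ℝ) i 1 (ix i'))))
      + (ε₁ * ε₂ * (((n : ℝ) + 1) * (Nat.descFactorial n j : ℝ)))
        * (((n - j : ℕ) : ℝ) * (0 : ℝ) ^ (n - j - 1)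
          * (Pi.single (M := fun _ : Fin n => ℝ) i 1 i0)) := by
    intro i j
    rw [show etaIter j = fun x : Fin n → ℝ =>
        (ε₁ * ε₂ * ε₂ * ((Nat.descFactorial 0 j : ℝ))) * x i1
        + (∑ i' ∈ (Finset.Icc 2 (n - 1)).attach,
            (ε₁ * ε₂ * ((i'.1 : ℝ) * (Nat.descFactorial (i'.1 - 1) j : ℝ)))
              * (x (ix i') * (x i0) ^ (i'.1 - 1 - j)))
        + (ε₁ * ε₂ * (((n : ℝ) + 1) * (Nat.descFactorial n j : ℝ))) * (x i0) ^ (n - j)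
      from funext (hEta j)]
    have T1 := (hc 0 i1).const_mul (ε₁ * ε₂ * ε₂ * ((Nat.descFactorial 0 j : ℝ)))
    have T2 := HasFDerivAt.fun_sum (u := (Finset.Icc 2 (n - 1)).attach)
      (A := fun i' (y : Fin n → ℝ) =>
        (ε₁ * ε₂ * ((i'.1 : ℝ) * (Nat.descFactorial (i'.1 - 1) j : ℝ)))
          * (y (ix i') * (y i0) ^ (i'.1 - 1 - j)))
      (fun i' _ => ((hc 0 (ix i')).mul (hpow 0 i0 (i'.1 - 1 - j))).const_mul
        (ε₁ * ε₂ * ((i'.1 : ℝ) * (Nat.descFactorial (i'.1 - 1) j : ℝ))))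
    have T3 := (hpow 0 i0 (n - j)).const_mul
      (ε₁ * ε₂ * (((n : ℝ) + 1) * (Nat.descFactorial n j : ℝ)))
    rw [((T1.fun_add T2).fun_add T3).fderiv]
    simp only [ContinuousLinearMap.add_apply, ContinuousLinearMap.smul_apply,
      ContinuousLinearMap.coe_sum', Finset.sum_apply, ContinuousLinearMap.proj_apply,
      smul_eq_mul, Pi.zero_apply, zero_mul, mul_zero, zero_add, add_zero, zero_smul,
      Pi.ofNat_apply]
  clear hc hpow hgd hGe0 hlamP hEta hgfun hg hf hlam hetaIter
  obtain ⟨m, rfl⟩ : ∃ m, n = m + 2 := ⟨n - 2, by omega⟩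
  set Qf : Fin (m + 2) → ℝ := fun j =>
    if (j : ℕ) = m + 1 then (((m + 2 : ℕ) : ℝ) + 1) * (Nat.descFactorial (m + 2) (m + 1) : ℝ)
    else (((j : ℕ) : ℝ) + 1) * (Nat.descFactorial (j : ℕ) (j : ℕ) : ℝ) with hQfdef
  set c : Fin (m + 2) → ℝ := fun j =>
    if (j : ℕ) = 0 then ε₁ * ε₂ * ε₂ else ε₁ * ε₂ * Qf j with hcdef
  have hcond : ∀ i j : Fin (m + 2), ((finRotate (m + 2)).symm i = j) ↔
      ((i : ℕ) = if (j : ℕ) = m + 1 then 0 else (j : ℕ) + 1) := by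
    intro i j
    rw [Equiv.symm_apply_eq, Fin.ext_iff, coe_finRotate]
    by_cases hj : (j : ℕ) = m + 1
    · rw [if_pos hj, if_pos (by rw [Fin.ext_iff, Fin.val_last]; exact hj)]
    · rw [if_neg hj, if_neg (show ¬ j = Fin.last (m+1) by rw [Fin.ext_iff, Fin.val_last]; exact hj)]
  have hMat : (Matrix.of fun i j : Fin (m + 2) =>
      fderiv ℝ (etaIter (j : ℕ)) 0 (Pi.single i 1))
      = (Matrix.diagonal c).submatrix (finRotate (m + 2)).symm id := by
    ext i j
    rw [Matrix.submatrix_apply, Matrix.diagonal_apply, Matrix.of_apply, hMentry i (j : ℕ), id_eq]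
    by_cases h : (finRotate (m + 2)).symm i = j
    · rw [if_pos h, h]
      have hij := (hcond i j).mp h
      simp only [hcdef, hQfdef]
      by_cases hj0 : (j : ℕ) = 0
      · rw [if_neg (show ¬(j : ℕ) = m + 1 by omega), hj0] at hij
        rw [if_pos hj0]
        rw [Finset.sum_eq_zero (fun i' _ => by
          have hmem' := Finset.mem_Icc.mp i'.2
          rw [hj0, zero_pow (show i'.1 - 1 - 0 ≠ 0 by omega)]
          ring)]
        rw [hj0, Pi.single_apply i (1:ℝ) i1,
          if_pos (show i1 = i by rw [Fin.ext_iff]; simp only [hi1def]; omega),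
          zero_pow (show (m + 2 - 0 - 1 : ℕ) ≠ 0 by omega)]
        norm_num
      · by_cases hjm : (j : ℕ) = m + 1
        · rw [if_pos hjm] at hij
          rw [if_neg hj0, if_pos hjm]
          rw [Finset.sum_eq_zero (fun i' _ => by
            have hmem' := Finset.mem_Icc.mp i'.2
            rw [Pi.single_apply, if_neg (show ¬ ix i' = i by
              rw [Fin.ext_iff]; simp only [hixdef]; omega)]
            ring)]
          rw [Pi.single_apply i (1:ℝ) i1,
            if_neg (show ¬ i1 = i by rw [Fin.ext_iff]; simp only [hi1def]; omega),
            Pi.single_apply i (1:ℝ) i0,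
            if_pos (show i0 = i by rw [Fin.ext_iff]; simp only [hi0def]; omega),
            hjm, show m + 2 - (m + 1) - 1 = 0 by omega, pow_zero,
            show m + 2 - (m + 1) = 1 by omega]
          push_cast
          ring
        · rw [if_neg hjm] at hij
          rw [if_neg hj0, if_neg hjm]
          have hjmem : (j : ℕ) + 1 ∈ Finset.Icc 2 (m + 2 - 1) := by
            rw [Finset.mem_Icc]; omega
          have hdf0 : Nat.descFactorial 0 (j : ℕ) = 0 := by
            rcases Nat.exists_eq_succ_of_ne_zero hj0 with ⟨k, hk⟩
            rw [hk]; exact Nat.zero_descFactorial_succ k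
          rw [Finset.sum_eq_single_of_mem
            (⟨(j : ℕ) + 1, hjmem⟩ : {x // x ∈ Finset.Icc 2 (m + 2 - 1)})
            (Finset.mem_attach _ _)
            (fun b _ hb => by
              have hmem' := Finset.mem_Icc.mp b.2
              have hbne : ¬ ix b = i := by
                intro hbi
                apply hb
                apply Subtype.ext
                have : (b.1 : ℕ) = (i : ℕ) := by
                  rw [← hbi]
                simp only [hixdef] at this ⊢
                omega
              rw [Pi.single_apply, if_neg hbne]
              ring)]
          rw [Pi.single_apply i (1:ℝ) i1,
            if_neg (show ¬ i1 = i by rw [Fin.ext_iff]; simp only [hi1def]; omega),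
            Pi.single_apply i (1:ℝ) i0,
            if_neg (show ¬ i0 = i by rw [Fin.ext_iff]; simp only [hi0def]; omega),
            hdf0, Pi.single_apply, if_pos (show ix (⟨(j : ℕ) + 1, hjmem⟩) = i by
              rw [Fin.ext_iff]; simp only [hixdef]; omega),
            show (j : ℕ) + 1 - 1 - (j : ℕ) = 0 by omega, pow_zero,
            show (j : ℕ) + 1 - 1 = (j : ℕ) by omega]
          push_cast
          ring
    · rw [if_neg h]
      have hij : ¬ ((i : ℕ) = if (j : ℕ) = m + 1 then 0 else (j : ℕ) + 1) :=
        fun hh => h ((hcond i j).mpr hh)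
      by_cases hj0 : (j : ℕ) = 0
      · rw [if_neg (show ¬(j : ℕ) = m + 1 by omega), hj0] at hij
        rw [Finset.sum_eq_zero (fun i' _ => by
          have hmem' := Finset.mem_Icc.mp i'.2
          rw [hj0, zero_pow (show i'.1 - 1 - 0 ≠ 0 by omega)]
          ring)]
        rw [hj0, Pi.single_apply i (1:ℝ) i1,
          if_neg (show ¬ i1 = i by rw [Fin.ext_iff]; simp only [hi1def]; omega),
          zero_pow (show (m + 2 - 0 - 1 : ℕ) ≠ 0 by omega)]
        norm_num
      · have hdf0 : Nat.descFactorial 0 (j : ℕ) = 0 := by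
          rcases Nat.exists_eq_succ_of_ne_zero hj0 with ⟨k, hk⟩
          rw [hk]; exact Nat.zero_descFactorial_succ k
        by_cases hjm : (j : ℕ) = m + 1
        · rw [if_pos hjm] at hij
          rw [Finset.sum_eq_zero (fun i' _ => by
            have hmem' := Finset.mem_Icc.mp i'.2
            rw [hjm, Nat.descFactorial_eq_zero_iff_lt.mpr (show i'.1 - 1 < m + 1 by omega)]
            push_cast
            ring)]
          rw [Pi.single_apply i (1:ℝ) i0,
            if_neg (show ¬ i0 = i by rw [Fin.ext_iff]; simp only [hi0def]; omega),
            hdf0]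
          push_cast
          ring
        · rw [if_neg hjm] at hij
          rw [Finset.sum_eq_zero (fun i' _ => by
            have hmem' := Finset.mem_Icc.mp i'.2
            by_cases hbi : ix i' = i
            · have hvi : (i'.1 : ℕ) = (i : ℕ) := by
                rw [← hbi]
              by_cases hvj : i'.1 ≤ (j : ℕ)
              · rw [Nat.descFactorial_eq_zero_iff_lt.mpr (show i'.1 - 1 < (j : ℕ) by omega)]
                push_cast
                ring
              · rw [zero_pow (show i'.1 - 1 - (j : ℕ) ≠ 0 by omega)]
                ring
            · rw [Pi.single_apply, if_neg hbi]
              ring)]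
          rw [hdf0, zero_pow (show (m + 2 - (j : ℕ) - 1 : ℕ) ≠ 0 by omega)]
          push_cast
          ring
  rw [hMat, Matrix.det_permute, Matrix.det_diagonal]
  rw [Equiv.Perm.sign_symm, sign_finRotate]
  have hprod : ∏ i : Fin (m + 2), c i =
      (ε₁ * ε₂ * ε₂) * ((ε₁ * ε₂) ^ (m + 1) * ∏ j ∈ Finset.univ \ {i0}, Qf j) := by
    rw [Finset.prod_eq_mul_prod_sdiff_singleton_of_mem (Finset.mem_univ i0),
      show c i0 = ε₁ * ε₂ * ε₂ from by simp only [hcdef]; rw [if_pos (by simp [hi0def])],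
      Finset.prod_congr rfl (fun j hj => show c j = (ε₁ * ε₂) * Qf j from by
        have hj' : j ≠ i0 := by simpa using (Finset.mem_sdiff.mp hj).2
        simp only [hcdef]
        rw [if_neg (fun hh => hj' (Fin.ext (by rw [hh])))]),
      Finset.prod_mul_distrib, Finset.prod_const]
    have hcard : (Finset.univ \ {i0} : Finset (Fin (m + 2))).card = m + 1 := by
      rw [Finset.card_sdiff_of_subset (by simp), Finset.card_univ, Fintype.card_fin,
        Finset.card_singleton]
      omega
    rw [hcard]
  rw [hprod]
  have hQpos : 0 < ∏ j ∈ Finset.univ \ {i0}, Qf j := by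
    apply Finset.prod_pos
    intro j hj
    simp only [hQfdef]
    split_ifs
    · apply mul_pos (by positivity)
      rw [Nat.cast_pos, Nat.pos_iff_ne_zero]
      intro hz
      rw [Nat.descFactorial_eq_zero_iff_lt] at hz
      omega
    · apply mul_pos (by positivity)
      rw [Nat.cast_pos, Nat.pos_iff_ne_zero]
      intro hz
      rw [Nat.descFactorial_eq_zero_iff_lt] at hz
      omega
  have hcast : ((((-1 : ℤˣ) ^ (m + 2 - 1) : ℤˣ) : ℤ) : ℝ) = (-1 : ℝ) ^ (m + 1) := by
    rw [show m + 2 - 1 = m + 1 by omega]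
    push_cast
    ring
  rw [hcast, show (-1 : ℝ) ^ (m + 1) * ((ε₁ * ε₂ * ε₂) *
        ((ε₁ * ε₂) ^ (m + 1) * ∏ j ∈ Finset.univ \ {i0}, Qf j)) =
      ((-1 : ℝ) ^ (m + 1) * ε₁ ^ (m + 2) * ε₂ ^ (m + 2 + 1)) *
        ∏ j ∈ Finset.univ \ {i0}, Qf j from by ring,
    sign_pm_mul_pos (pm_mul (pm_mul (pm_pow (Or.inr rfl) (m + 1)) (pm_pow hε₁ (m + 2)))
      (pm_pow hε₂ (m + 2 + 1))) hQpos,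
    show m + 2 - 1 = m + 1 by omega]
end

section
/- Let f : ℝ² → ℝ³ be f(x₁,x₂) = (x₁², x₁h(x₁², x₂), x₂) for a smooth function h, and set w = det(∂f/∂x₂, ∂f/∂x₁, ∂²f/∂x₁²). Then w(x₁,x₂) = 8x₁² h_{x₁}(x₁², x₂) + 8x₁⁴ h_{x₁x₁}(x₁², x₂) - 2h(x₁², x₂), and consequently ∂w/∂x₂(0) = -2h_{x₂}(0), det Hess w(0) = -24 h_{x₂x₂}(0) h_{x₁}(0), and ∂²w/∂x₁²(0) = 12 h_{x₁}(0), assuming h(0,0) = 0. -/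
/-- Partial derivative of a function on ℝ² (as `Fin 2 → ℝ`) in direction `i`. -/
noncomputable def pd2 (i : Fin 2) (g : (Fin 2 → ℝ) → ℝ) : (Fin 2 → ℝ) → ℝ :=
  fun x => fderiv ℝ g x (Pi.single i 1)


/-- first partial on ℝ×ℝ -/
noncomputable def D1 (g : ℝ × ℝ → ℝ) (p : ℝ × ℝ) : ℝ := fderiv ℝ g p (1, 0)
/-- second partial on ℝ×ℝ -/
noncomputable def D2 (g : ℝ × ℝ → ℝ) (p : ℝ × ℝ) : ℝ := fderiv ℝ g p (0, 1)

open ContinuousLinearMap in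
lemma pd2_eval (k : ℝ × ℝ → ℝ) {L : ℝ × ℝ →L[ℝ] ℝ} (x : Fin 2 → ℝ)
    (hk : HasFDerivAt k L (x 0, x 1)) :
    pd2 0 (fun y => k (y 0, y 1)) x = L (1, 0) ∧
    pd2 1 (fun y => k (y 0, y 1)) x = L (0, 1) := by
  have hq : HasFDerivAt (fun y : Fin 2 → ℝ => ((y 0 : ℝ), y 1))
      ((ContinuousLinearMap.proj (R := ℝ) (φ := fun _ : Fin 2 => ℝ) 0).prod
        (ContinuousLinearMap.proj 1)) x :=
    ((ContinuousLinearMap.proj (R := ℝ) (φ := fun _ : Fin 2 => ℝ) 0).prod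
      (ContinuousLinearMap.proj 1)).hasFDerivAt
  have hc : HasFDerivAt (fun y : Fin 2 → ℝ => k (y 0, y 1))
      (L.comp ((ContinuousLinearMap.proj (R := ℝ) (φ := fun _ : Fin 2 => ℝ) 0).prod
        (ContinuousLinearMap.proj 1))) x := hk.comp x hq
  constructor <;>
  · show fderiv ℝ _ x _ = _
    rw [hc.fderiv]
    simp [Pi.single_apply]

lemma deriv_slice_fst (g : ℝ × ℝ → ℝ) (hg : Differentiable ℝ g) (a b : ℝ) :
    deriv (fun s => g (s, b)) a = D1 g (a, b) := by
  have h1 : HasDerivAt (fun s : ℝ => ((s : ℝ), b)) (1, 0) a :=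
    (hasDerivAt_id a).prodMk (hasDerivAt_const a b)
  exact ((hg (a, b)).hasFDerivAt.comp_hasDerivAt a h1).deriv

lemma deriv_slice_snd (g : ℝ × ℝ → ℝ) (hg : Differentiable ℝ g) (a b : ℝ) :
    deriv (fun s => g (a, s)) b = D2 g (a, b) := by
  have h1 : HasDerivAt (fun s : ℝ => ((a : ℝ), s)) (0, 1) b :=
    (hasDerivAt_const b a).prodMk (hasDerivAt_id b)
  exact ((hg (a, b)).hasFDerivAt.comp_hasDerivAt b h1).deriv

lemma D1_smooth (g : ℝ × ℝ → ℝ) (hg : ContDiff ℝ (⊤ : ℕ∞) g) : ContDiff ℝ (⊤ : ℕ∞) (D1 g) :=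
  (ContinuousLinearMap.apply ℝ ℝ ((1 : ℝ), (0 : ℝ))).contDiff.comp (hg.fderiv_right (by simp))

lemma D2_smooth (g : ℝ × ℝ → ℝ) (hg : ContDiff ℝ (⊤ : ℕ∞) g) : ContDiff ℝ (⊤ : ℕ∞) (D2 g) :=
  (ContinuousLinearMap.apply ℝ ℝ ((0 : ℝ), (1 : ℝ))).contDiff.comp (hg.fderiv_right (by simp))

lemma fd_ab (g : ℝ × ℝ → ℝ) (q : ℝ × ℝ) (a b : ℝ) :
    fderiv ℝ g q (a, b) = a * D1 g q + b * D2 g q := by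
  have hab : ((a, b) : ℝ × ℝ) = a • ((1 : ℝ), (0 : ℝ)) + b • ((0 : ℝ), (1 : ℝ)) := by
    simp [Prod.ext_iff]
  rw [hab, map_add, map_smul, map_smul]
  rfl

lemma powfst (n : ℕ) (p : ℝ × ℝ) :
    HasFDerivAt (fun q : ℝ × ℝ => q.1 ^ n)
      (((n : ℝ) * p.1 ^ (n - 1)) • ContinuousLinearMap.fst ℝ ℝ ℝ) p :=
  (hasDerivAt_pow n p.1).comp_hasFDerivAt p hasFDerivAt_fst

lemma comp_u_hasFDeriv (g : ℝ × ℝ → ℝ) (hg : Differentiable ℝ g) (p : ℝ × ℝ) :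
    HasFDerivAt (fun q : ℝ × ℝ => g (q.1 ^ 2, q.2))
      ((fderiv ℝ g (p.1 ^ 2, p.2)).comp
        ((((2 : ℝ) * p.1) • ContinuousLinearMap.fst ℝ ℝ ℝ).prod
          (ContinuousLinearMap.snd ℝ ℝ ℝ))) p := by
  have hsq : HasFDerivAt (fun q : ℝ × ℝ => q.1 ^ 2)
      (((2 : ℝ) * p.1) • ContinuousLinearMap.fst ℝ ℝ ℝ) p := by
    simpa using powfst 2 p
  have hu : HasFDerivAt (fun q : ℝ × ℝ => ((q.1 ^ 2 : ℝ), q.2))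
      ((((2 : ℝ) * p.1) • ContinuousLinearMap.fst ℝ ℝ ℝ).prod
        (ContinuousLinearMap.snd ℝ ℝ ℝ)) p := hsq.prodMk hasFDerivAt_snd
  exact (hg (p.1 ^ 2, p.2)).hasFDerivAt.comp p hu

/-- For `f(x₁,x₂) = (x₁², x₁h(x₁², x₂), x₂)` and
`w = det(∂f/∂x₂, ∂f/∂x₁, ∂²f/∂x₁²)`, one has
`w = 8x₁²h_{x₁}(x₁²,x₂) + 8x₁⁴h_{x₁x₁}(x₁²,x₂) - 2h(x₁²,x₂)`, and consequently
`w_{x₂}(0) = -2h_{x₂}(0)`, `det Hess w(0) = -24 h_{x₂x₂}(0) h_{x₁}(0)` and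
`w_{x₁x₁}(0) = 12 h_{x₁}(0)`. -/
theorem whitney_S1_invariant_formulas (h : ℝ → ℝ → ℝ)
    (hsmooth : ContDiff ℝ (⊤ : ℕ∞) (fun p : ℝ × ℝ => h p.1 p.2)) (h0 : h 0 0 = 0)
    -- partial derivatives of h
    (h1 h11 h2 h22 : ℝ → ℝ → ℝ)
    (hh1 : ∀ a b, h1 a b = deriv (fun s => h s b) a)
    (hh11 : ∀ a b, h11 a b = deriv (fun s => h1 s b) a)
    (hh2 : ∀ a b, h2 a b = deriv (fun s => h a s) b)
    (hh22 : ∀ a b, h22 a b = deriv (fun s => h2 a s) b)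
    -- the map f : ℝ² → ℝ³
    (f : (Fin 2 → ℝ) → (Fin 3 → ℝ))
    (hf : ∀ x, f x = ![(x 0) ^ 2, x 0 * h ((x 0) ^ 2) (x 1), x 1])
    -- w = det(ξf, ηf, ηηf) with ξ = ∂/∂x₂, η = ∂/∂x₁
    (w : (Fin 2 → ℝ) → ℝ)
    (hw : ∀ x, w x = (Matrix.of fun i j : Fin 3 =>
      (![pd2 1 (fun y => f y i), pd2 0 (fun y => f y i),
         pd2 0 (pd2 0 (fun y => f y i))] j) x).det) :
    (∀ x, w x = 8 * (x 0) ^ 2 * h1 ((x 0) ^ 2) (x 1) +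
        8 * (x 0) ^ 4 * h11 ((x 0) ^ 2) (x 1) - 2 * h ((x 0) ^ 2) (x 1)) ∧
      pd2 1 w 0 = -2 * h2 0 0 ∧
      (Matrix.det !![pd2 0 (pd2 0 w) 0, pd2 0 (pd2 1 w) 0;
                     pd2 1 (pd2 0 w) 0, pd2 1 (pd2 1 w) 0]) = -24 * h22 0 0 * h1 0 0 ∧
      pd2 0 (pd2 0 w) 0 = 12 * h1 0 0 := by
  have hHc : ContDiff ℝ (⊤ : ℕ∞) (fun p : ℝ × ℝ => h p.1 p.2) := hsmooth
  set H : ℝ × ℝ → ℝ := fun p => h p.1 p.2 with hHdef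
  have hHd : Differentiable ℝ H := hHc.differentiable (by simp)
  have hD1c : ContDiff ℝ (⊤ : ℕ∞) (D1 H) := D1_smooth H hHc
  have hD1d : Differentiable ℝ (D1 H) := hD1c.differentiable (by simp)
  have hD2c : ContDiff ℝ (⊤ : ℕ∞) (D2 H) := D2_smooth H hHc
  have hD2d : Differentiable ℝ (D2 H) := hD2c.differentiable (by simp)
  have hD11c : ContDiff ℝ (⊤ : ℕ∞) (D1 (D1 H)) := D1_smooth _ hD1c
  have hD11d : Differentiable ℝ (D1 (D1 H)) := hD11c.differentiable (by simp)
  have hD111d : Differentiable ℝ (D1 (D1 (D1 H))) := (D1_smooth _ hD11c).differentiable (by simp)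
  have hD21d : Differentiable ℝ (D2 (D1 H)) := (D2_smooth _ hD1c).differentiable (by simp)
  have hD211d : Differentiable ℝ (D2 (D1 (D1 H))) := (D2_smooth _ hD11c).differentiable (by simp)
  -- relations between named partials of h and D1/D2 of H
  have e1 : ∀ a b : ℝ, h1 a b = D1 H (a, b) := fun a b => by
    rw [hh1]; exact deriv_slice_fst H hHd a b
  have e2 : ∀ a b : ℝ, h2 a b = D2 H (a, b) := fun a b => by
    rw [hh2]; exact deriv_slice_snd H hHd a b
  have e11 : ∀ a b : ℝ, h11 a b = D1 (D1 H) (a, b) := fun a b => by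
    rw [hh11]
    have : (fun s => h1 s b) = fun s => D1 H (s, b) := funext fun s => e1 s b
    rw [this]; exact deriv_slice_fst (D1 H) hD1d a b
  have e22 : ∀ a b : ℝ, h22 a b = D2 (D2 H) (a, b) := fun a b => by
    rw [hh22]
    have : (fun s => h2 a s) = fun s => D2 H (a, s) := funext fun s => e2 a s
    rw [this]; exact deriv_slice_snd (D2 H) hD2d a b
  -- the three component functions of f
  have hf0 : (fun y : Fin 2 → ℝ => f y 0) = fun y : Fin 2 → ℝ => (y 0) ^ 2 :=
    funext fun y => by rw [hf]; simp
  have hf1 : (fun y : Fin 2 → ℝ => f y 1) = fun y : Fin 2 → ℝ => y 0 * H ((y 0) ^ 2, y 1) :=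
    funext fun y => by rw [hf]; simp [hHdef]
  have hf2 : (fun y : Fin 2 → ℝ => f y 2) = fun y : Fin 2 → ℝ => y 1 :=
    funext fun y => by rw [hf]; simp
  -- matrix entries
  have E00 : ∀ x, pd2 1 (fun y => f y 0) x = 0 := fun x => by
    rw [hf0]
    exact (pd2_eval (fun p : ℝ × ℝ => p.1 ^ 2) x (powfst 2 (x 0, x 1))).2.trans (by simp)
  have E01 : ∀ x, pd2 0 (fun y => f y 0) x = 2 * x 0 := fun x => by
    rw [hf0]
    exact (pd2_eval (fun p : ℝ × ℝ => p.1 ^ 2) x (powfst 2 (x 0, x 1))).1.trans (by simp)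
  have E02 : ∀ x, pd2 0 (pd2 0 (fun y => f y 0)) x = 2 := fun x => by
    rw [funext E01]
    exact (pd2_eval (fun p : ℝ × ℝ => 2 * p.1) x
      (hasFDerivAt_fst.const_mul 2)).1.trans (by simp)
  have E10 : ∀ x, pd2 1 (fun y => f y 1) x = x 0 * D2 H ((x 0) ^ 2, x 1) := fun x => by
    rw [hf1]
    exact (pd2_eval (fun p : ℝ × ℝ => p.1 * H (p.1 ^ 2, p.2)) x
      (hasFDerivAt_fst.mul (comp_u_hasFDeriv H hHd (x 0, x 1)))).2.trans
      (by simp [fd_ab]; try ring)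
  have E11 : ∀ x, pd2 0 (fun y => f y 1) x =
      H ((x 0) ^ 2, x 1) + 2 * (x 0) ^ 2 * D1 H ((x 0) ^ 2, x 1) := fun x => by
    rw [hf1]
    exact (pd2_eval (fun p : ℝ × ℝ => p.1 * H (p.1 ^ 2, p.2)) x
      (hasFDerivAt_fst.mul (comp_u_hasFDeriv H hHd (x 0, x 1)))).1.trans
      (by simp [fd_ab]; try ring)
  have E12 : ∀ x, pd2 0 (pd2 0 (fun y => f y 1)) x =
      6 * x 0 * D1 H ((x 0) ^ 2, x 1) + 4 * (x 0) ^ 3 * D1 (D1 H) ((x 0) ^ 2, x 1) := fun x => by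
    rw [funext E11]
    exact (pd2_eval (fun p : ℝ × ℝ => H (p.1 ^ 2, p.2) + 2 * p.1 ^ 2 * D1 H (p.1 ^ 2, p.2)) x
      ((comp_u_hasFDeriv H hHd (x 0, x 1)).add
        (((powfst 2 (x 0, x 1)).const_mul 2).mul
          (comp_u_hasFDeriv (D1 H) hD1d (x 0, x 1))))).1.trans
      (by simp [fd_ab]; try ring)
  have E20 : ∀ x, pd2 1 (fun y => f y 2) x = 1 := fun x => by
    rw [hf2]
    exact (pd2_eval (fun p : ℝ × ℝ => p.2) x hasFDerivAt_snd).2.trans (by simp)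
  have E21 : ∀ x, pd2 0 (fun y => f y 2) x = 0 := fun x => by
    rw [hf2]
    exact (pd2_eval (fun p : ℝ × ℝ => p.2) x hasFDerivAt_snd).1.trans (by simp)
  have E22 : ∀ x, pd2 0 (pd2 0 (fun y => f y 2)) x = 0 := fun x => by
    rw [funext E21]
    exact (pd2_eval (fun _ : ℝ × ℝ => (0 : ℝ)) x (hasFDerivAt_const 0 _)).1.trans (by simp)
  -- part 1 : the formula for w
  have part1 : ∀ x, w x = 8 * (x 0) ^ 2 * h1 ((x 0) ^ 2) (x 1) +
      8 * (x 0) ^ 4 * h11 ((x 0) ^ 2) (x 1) - 2 * h ((x 0) ^ 2) (x 1) := fun x => by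
    rw [hw x, Matrix.det_fin_three]
    simp only [Matrix.of_apply, Matrix.cons_val', Matrix.cons_val_zero, Matrix.cons_val_one,
      Matrix.head_cons, Matrix.cons_val_two, Matrix.tail_cons, Matrix.empty_val',
      Matrix.cons_val_fin_one, Matrix.head_fin_const]
    rw [E00 x, E01 x, E02 x, E10 x, E11 x, E12 x, E20 x, E21 x, E22 x, e1, e11]
    simp only [hHdef]
    ring
  -- closed form of w in terms of H
  have hwW : w = fun y : Fin 2 → ℝ =>
      8 * (y 0) ^ 2 * D1 H ((y 0) ^ 2, y 1) + 8 * (y 0) ^ 4 * D1 (D1 H) ((y 0) ^ 2, y 1)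
        - 2 * H ((y 0) ^ 2, y 1) := funext fun x => by
    rw [part1 x, e1, e11]
  have PW : ∀ x : Fin 2 → ℝ,
      pd2 0 (fun y : Fin 2 → ℝ => 8 * (y 0) ^ 2 * D1 H ((y 0) ^ 2, y 1)
          + 8 * (y 0) ^ 4 * D1 (D1 H) ((y 0) ^ 2, y 1) - 2 * H ((y 0) ^ 2, y 1)) x
        = 12 * x 0 * D1 H ((x 0) ^ 2, x 1) + 48 * (x 0) ^ 3 * D1 (D1 H) ((x 0) ^ 2, x 1)
          + 16 * (x 0) ^ 5 * D1 (D1 (D1 H)) ((x 0) ^ 2, x 1) ∧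
      pd2 1 (fun y : Fin 2 → ℝ => 8 * (y 0) ^ 2 * D1 H ((y 0) ^ 2, y 1)
          + 8 * (y 0) ^ 4 * D1 (D1 H) ((y 0) ^ 2, y 1) - 2 * H ((y 0) ^ 2, y 1)) x
        = 8 * (x 0) ^ 2 * D2 (D1 H) ((x 0) ^ 2, x 1)
          + 8 * (x 0) ^ 4 * D2 (D1 (D1 H)) ((x 0) ^ 2, x 1) - 2 * D2 H ((x 0) ^ 2, x 1) := by
    intro x
    have P := pd2_eval (fun p : ℝ × ℝ => 8 * p.1 ^ 2 * D1 H (p.1 ^ 2, p.2)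
        + 8 * p.1 ^ 4 * D1 (D1 H) (p.1 ^ 2, p.2) - 2 * H (p.1 ^ 2, p.2)) x
      (((((powfst 2 (x 0, x 1)).const_mul 8).mul
          (comp_u_hasFDeriv (D1 H) hD1d (x 0, x 1))).add
        ((((powfst 4 (x 0, x 1)).const_mul 8).mul
          (comp_u_hasFDeriv (D1 (D1 H)) hD11d (x 0, x 1))))).sub
        ((comp_u_hasFDeriv H hHd (x 0, x 1)).const_mul 2))
    exact ⟨P.1.trans (by simp [fd_ab]; try ring), P.2.trans (by simp [fd_ab]; try ring)⟩
  have hpd0w : pd2 0 w = fun x : Fin 2 → ℝ =>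
      12 * x 0 * D1 H ((x 0) ^ 2, x 1) + 48 * (x 0) ^ 3 * D1 (D1 H) ((x 0) ^ 2, x 1)
        + 16 * (x 0) ^ 5 * D1 (D1 (D1 H)) ((x 0) ^ 2, x 1) := by
    rw [hwW]; funext x; exact (PW x).1
  have hpd1w : pd2 1 w = fun x : Fin 2 → ℝ =>
      8 * (x 0) ^ 2 * D2 (D1 H) ((x 0) ^ 2, x 1)
        + 8 * (x 0) ^ 4 * D2 (D1 (D1 H)) ((x 0) ^ 2, x 1) - 2 * D2 H ((x 0) ^ 2, x 1) := by
    rw [hwW]; funext x; exact (PW x).2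
  have V00 : pd2 0 (pd2 0 w) 0 = 12 * D1 H (0, 0) ∧ pd2 1 (pd2 0 w) 0 = 0 := by
    rw [hpd0w]
    have P := pd2_eval (fun p : ℝ × ℝ => 12 * p.1 * D1 H (p.1 ^ 2, p.2)
        + 48 * p.1 ^ 3 * D1 (D1 H) (p.1 ^ 2, p.2)
        + 16 * p.1 ^ 5 * D1 (D1 (D1 H)) (p.1 ^ 2, p.2)) (0 : Fin 2 → ℝ)
      ((((hasFDerivAt_fst.const_mul 12).mul (comp_u_hasFDeriv (D1 H) hD1d _)).add
        (((powfst 3 _).const_mul 48).mul (comp_u_hasFDeriv (D1 (D1 H)) hD11d _))).add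
        (((powfst 5 _).const_mul 16).mul (comp_u_hasFDeriv (D1 (D1 (D1 H))) hD111d _)))
    refine ⟨P.1.trans ?_, P.2.trans ?_⟩ <;>
    · simp [fd_ab]
      try norm_num
      try ring
  have V11 : pd2 0 (pd2 1 w) 0 = 0 ∧ pd2 1 (pd2 1 w) 0 = -2 * D2 (D2 H) (0, 0) := by
    rw [hpd1w]
    have P := pd2_eval (fun p : ℝ × ℝ => 8 * p.1 ^ 2 * D2 (D1 H) (p.1 ^ 2, p.2)
        + 8 * p.1 ^ 4 * D2 (D1 (D1 H)) (p.1 ^ 2, p.2) - 2 * D2 H (p.1 ^ 2, p.2)) (0 : Fin 2 → ℝ)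
      (((((powfst 2 _).const_mul 8).mul (comp_u_hasFDeriv (D2 (D1 H)) hD21d _)).add
        ((((powfst 4 _).const_mul 8).mul (comp_u_hasFDeriv (D2 (D1 (D1 H))) hD211d _)))).sub
        ((comp_u_hasFDeriv (D2 H) hD2d _).const_mul 2))
    refine ⟨P.1.trans ?_, P.2.trans ?_⟩ <;>
    · simp [fd_ab]
      try norm_num
      try ring
  refine ⟨part1, ?_, ?_, ?_⟩
  · rw [hwW, e2]
    exact (PW 0).2.trans (by simp; try norm_num; try ring)
  · rw [Matrix.det_fin_two_of, V00.1, V00.2, V11.1, V11.2, e22, e1]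
    ring
  · rw [V00.1, e1]
end
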